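/- The pairing (Q, Q') ↦ Q̂(Q') from binary sextics and binary cubics to binary cubics is SL(2,ℂ)-equivariant: for every g ∈ SL(2,ℂ), every binary sextic Q and every binary cubic Q', one has (g·Q)^(g·Q') = g·(Q̂(Q')), where the action of g on a binary form R is (g·R)(z) := R(g⁻¹·z) and (g·Q)^ denotes the endomorphism constructed from the sextic g·Q. -/

import Mathlib

open MvPolynomial Finset

/-- The polynomial obtained from `Q(z)` by the linear change of variables `z ↦ M z`;
its value at `w` is `Q (M w)`. -/
noncomputable def substMat (M : Matrix (Fin 2) (Fin 2) ℂ) (Q : MvPolynomial (Fin 2) ℂ) :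
    MvPolynomial (Fin 2) ℂ :=
  aeval (fun i => MvPolynomial.C (M i 0) * X 0 + MvPolynomial.C (M i 1) * X 1) Q

/-- The action of `g ∈ SL(2,ℂ)` on binary forms: `(g·R)(z) = R(g⁻¹ z)`. -/
noncomputable def slAct (g : Matrix.SpecialLinearGroup (Fin 2) ℂ)
    (R : MvPolynomial (Fin 2) ℂ) : MvPolynomial (Fin 2) ℂ :=
  substMat ((g⁻¹ : Matrix.SpecialLinearGroup (Fin 2) ℂ) : Matrix (Fin 2) (Fin 2) ℂ) R

/-- The binary cubic `b0 z1^3 + b1 z1^2 z2 + b2 z1 z2^2 + b3 z2^3`. -/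
noncomputable def cubicOf (b : Fin 4 → ℂ) : MvPolynomial (Fin 2) ℂ :=
  MvPolynomial.C (b 0) * X 0 ^ 3 + MvPolynomial.C (b 1) * X 0 ^ 2 * X 1
    + MvPolynomial.C (b 2) * X 0 * X 1 ^ 2 + MvPolynomial.C (b 3) * X 1 ^ 3

/-- The coefficients `a_i` of a binary sextic `Q = Σ binom(6,i) a_i z1^i z2^{6−i}`. -/
noncomputable def sextCoeff (Q : MvPolynomial (Fin 2) ℂ) (i : ℕ) : ℂ :=
  (Nat.choose 6 i : ℂ)⁻¹ *
    MvPolynomial.coeff (Finsupp.single 0 i + Finsupp.single 1 (6 - i)) Q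

/-- The coefficients of a binary cubic `b0 z1^3 + b1 z1^2 z2 + b2 z1 z2^2 + b3 z2^3`. -/
noncomputable def cubCoeff (P : MvPolynomial (Fin 2) ℂ) : Fin 4 → ℂ := fun j =>
  MvPolynomial.coeff (Finsupp.single 0 (3 - (j : ℕ)) + Finsupp.single 1 (j : ℕ)) P

/-- The endomorphism `Q̂` attached to a binary sextic `Q`, evaluated on a binary cubic `P`:
it is the linear extension of `Q̂(z1^3) = −a3 z1^3 − 3a2 z1^2z2 − 3a1 z1z2^2 − a0 z2^3`,
`Q̂(z1^2z2) = a4 z1^3 + 3a3 z1^2z2 + 3a2 z1z2^2 + a1 z2^3`, `Q̂(z1z2^2) = −a5 z1^3 − 3a4 z1^2z2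
− 3a3 z1z2^2 − a2 z2^3`, `Q̂(z2^3) = a6 z1^3 + 3a5 z1^2z2 + 3a4 z1z2^2 + a3 z2^3`. -/
noncomputable def qhat (Q P : MvPolynomial (Fin 2) ℂ) : MvPolynomial (Fin 2) ℂ :=
  let a := sextCoeff Q
  let b := cubCoeff P
  cubicOf ![-(a 3) * b 0 + a 4 * b 1 - a 5 * b 2 + a 6 * b 3,
            -3 * a 2 * b 0 + 3 * a 3 * b 1 - 3 * a 4 * b 2 + 3 * a 5 * b 3,
            -3 * a 1 * b 0 + 3 * a 2 * b 1 - 3 * a 3 * b 2 + 3 * a 4 * b 3,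
            -(a 0) * b 0 + a 1 * b 1 - a 2 * b 2 + a 3 * b 3]


private lemma CXX (c : ℂ) (i j : ℕ) :
    MvPolynomial.C c * X 0 ^ i * X (1 : Fin 2) ^ j
      = monomial (Finsupp.single 0 i + Finsupp.single 1 j) c := by
  rw [C_apply, X_pow_eq_monomial, X_pow_eq_monomial, monomial_mul, monomial_mul]
  simp

private lemma msingle_eq (i j k l : ℕ) :
    (Finsupp.single (0 : Fin 2) i + Finsupp.single 1 j = Finsupp.single 0 k + Finsupp.single 1 l)
      ↔ (i = k ∧ j = l) := by
  constructor
  · intro h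
    constructor
    · have h0 := DFunLike.congr_fun h 0
      simpa using h0
    · have h1 := DFunLike.congr_fun h 1
      simpa using h1
  · rintro ⟨rfl, rfl⟩; rfl

private lemma coeff_CXX (c : ℂ) (i j k l : ℕ) :
    coeff (Finsupp.single 0 k + Finsupp.single 1 l)
      (MvPolynomial.C c * X 0 ^ i * X (1 : Fin 2) ^ j) = if i = k ∧ j = l then c else 0 := by
  rw [CXX, coeff_monomial]
  simp [msingle_eq]

private lemma fin2_finsupp_eq (m : Fin 2 →₀ ℕ) :
    m = Finsupp.single 0 (m 0) + Finsupp.single 1 (m 1) := by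
  ext x
  fin_cases x <;> simp [Finsupp.single_apply]

private lemma fin2_degree (m : Fin 2 →₀ ℕ) : Finsupp.degree m = m 0 + m 1 := by
  show ∑ i ∈ m.support, m i = m 0 + m 1
  rw [show ∑ i ∈ m.support, m i = ∑ i : Fin 2, m i from
    Finset.sum_subset (Finset.subset_univ _) (by intro x _ hx; simpa using hx)]
  simp [Fin.sum_univ_two]

/-- Explicit binary sextic with raw coefficients. -/
noncomputable def sextOf (c0 c1 c2 c3 c4 c5 c6 : ℂ) : MvPolynomial (Fin 2) ℂ :=
  MvPolynomial.C c0 * X 0 ^ 0 * X 1 ^ 6 + MvPolynomial.C c1 * X 0 ^ 1 * X 1 ^ 5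
    + MvPolynomial.C c2 * X 0 ^ 2 * X 1 ^ 4 + MvPolynomial.C c3 * X 0 ^ 3 * X 1 ^ 3
    + MvPolynomial.C c4 * X 0 ^ 4 * X 1 ^ 2 + MvPolynomial.C c5 * X 0 ^ 5 * X 1 ^ 1
    + MvPolynomial.C c6 * X 0 ^ 6 * X 1 ^ 0

private lemma cubicOf_eq (b : Fin 4 → ℂ) :
    cubicOf b = MvPolynomial.C (b 0) * X 0 ^ 3 * X 1 ^ 0
      + MvPolynomial.C (b 1) * X 0 ^ 2 * X 1 ^ 1
      + MvPolynomial.C (b 2) * X 0 ^ 1 * X 1 ^ 2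
      + MvPolynomial.C (b 3) * X 0 ^ 0 * X 1 ^ 3 := by
  rw [cubicOf]; ring

private lemma sext_repr (Q : MvPolynomial (Fin 2) ℂ) (hQ : Q.IsHomogeneous 6) :
    Q = sextOf (coeff (Finsupp.single 0 0 + Finsupp.single 1 6) Q)
        (coeff (Finsupp.single 0 1 + Finsupp.single 1 5) Q)
        (coeff (Finsupp.single 0 2 + Finsupp.single 1 4) Q)
        (coeff (Finsupp.single 0 3 + Finsupp.single 1 3) Q)
        (coeff (Finsupp.single 0 4 + Finsupp.single 1 2) Q)
        (coeff (Finsupp.single 0 5 + Finsupp.single 1 1) Q)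
        (coeff (Finsupp.single 0 6 + Finsupp.single 1 0) Q) := by
  apply MvPolynomial.ext; intro m
  obtain ⟨i, j, rfl⟩ : ∃ i j, m = Finsupp.single 0 i + Finsupp.single 1 j :=
    ⟨m 0, m 1, fin2_finsupp_eq m⟩
  rw [sextOf]
  simp only [coeff_add, coeff_CXX]
  by_cases h6 : i + j = 6
  · have hi : i ≤ 6 := by omega
    obtain rfl : j = 6 - i := by omega
    interval_cases i <;> norm_num
  · rw [hQ.coeff_eq_zero (by
      rw [fin2_degree]
      simp only [Finsupp.add_apply, Finsupp.single_apply]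
      norm_num
      omega)]
    split_ifs <;> first | (exfalso; omega) | norm_num

private lemma cub_repr (Q' : MvPolynomial (Fin 2) ℂ) (hQ' : Q'.IsHomogeneous 3) :
    Q' = cubicOf ![coeff (Finsupp.single 0 3 + Finsupp.single 1 0) Q',
        coeff (Finsupp.single 0 2 + Finsupp.single 1 1) Q',
        coeff (Finsupp.single 0 1 + Finsupp.single 1 2) Q',
        coeff (Finsupp.single 0 0 + Finsupp.single 1 3) Q'] := by
  rw [cubicOf_eq]
  simp only [Matrix.cons_val_zero, Matrix.cons_val_one, Matrix.head_cons,
    Matrix.cons_val_two, Matrix.tail_cons, Matrix.cons_val_three]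
  apply MvPolynomial.ext; intro m
  obtain ⟨i, j, rfl⟩ : ∃ i j, m = Finsupp.single 0 i + Finsupp.single 1 j :=
    ⟨m 0, m 1, fin2_finsupp_eq m⟩
  simp only [coeff_add, coeff_CXX]
  by_cases h3 : i + j = 3
  · obtain rfl : j = 3 - i := by omega
    have hi : i ≤ 3 := by omega
    interval_cases i <;> norm_num
  · rw [hQ'.coeff_eq_zero (by
      rw [fin2_degree]
      simp only [Finsupp.add_apply, Finsupp.single_apply]
      norm_num
      omega)]
    split_ifs <;> first | (exfalso; omega) | norm_num

private lemma sextCoeff_sextOf0 (c0 c1 c2 c3 c4 c5 c6 : ℂ) :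
    sextCoeff (sextOf c0 c1 c2 c3 c4 c5 c6) 0 = c0 := by
  rw [sextCoeff, sextOf]
  simp only [coeff_add, coeff_CXX]
  norm_num [Nat.choose]

private lemma sextCoeff_sextOf1 (c0 c1 c2 c3 c4 c5 c6 : ℂ) :
    sextCoeff (sextOf c0 c1 c2 c3 c4 c5 c6) 1 = (6 : ℂ)⁻¹ * c1 := by
  rw [sextCoeff, sextOf]
  simp only [coeff_add, coeff_CXX]
  norm_num [Nat.choose]

private lemma sextCoeff_sextOf2 (c0 c1 c2 c3 c4 c5 c6 : ℂ) :
    sextCoeff (sextOf c0 c1 c2 c3 c4 c5 c6) 2 = (15 : ℂ)⁻¹ * c2 := by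
  rw [sextCoeff, sextOf]
  simp only [coeff_add, coeff_CXX]
  norm_num [Nat.choose]

private lemma sextCoeff_sextOf3 (c0 c1 c2 c3 c4 c5 c6 : ℂ) :
    sextCoeff (sextOf c0 c1 c2 c3 c4 c5 c6) 3 = (20 : ℂ)⁻¹ * c3 := by
  rw [sextCoeff, sextOf]
  simp only [coeff_add, coeff_CXX]
  norm_num [Nat.choose]

private lemma sextCoeff_sextOf4 (c0 c1 c2 c3 c4 c5 c6 : ℂ) :
    sextCoeff (sextOf c0 c1 c2 c3 c4 c5 c6) 4 = (15 : ℂ)⁻¹ * c4 := by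
  rw [sextCoeff, sextOf]
  simp only [coeff_add, coeff_CXX]
  norm_num [Nat.choose]

private lemma sextCoeff_sextOf5 (c0 c1 c2 c3 c4 c5 c6 : ℂ) :
    sextCoeff (sextOf c0 c1 c2 c3 c4 c5 c6) 5 = (6 : ℂ)⁻¹ * c5 := by
  rw [sextCoeff, sextOf]
  simp only [coeff_add, coeff_CXX]
  norm_num [Nat.choose]

private lemma sextCoeff_sextOf6 (c0 c1 c2 c3 c4 c5 c6 : ℂ) :
    sextCoeff (sextOf c0 c1 c2 c3 c4 c5 c6) 6 = c6 := by
  rw [sextCoeff, sextOf]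
  simp only [coeff_add, coeff_CXX]
  norm_num [Nat.choose]

private lemma cubCoeff_cubicOf (b : Fin 4 → ℂ) : cubCoeff (cubicOf b) = b := by
  funext j
  fin_cases j <;>
    · simp only [cubCoeff, cubicOf_eq, coeff_add, coeff_CXX]
      norm_num
      try rfl


set_option maxHeartbeats 2000000 in
private lemma key6 (p q r s c0 c1 c2 c3 c4 c5 c6 : ℂ) :
    substMat !![p, q; r, s] (sextOf c0 c1 c2 c3 c4 c5 c6) =
      sextOf (s^6 * c0 + q * s^5 * c1 + q^2 * s^4 * c2 + q^3 * s^3 * c3 + q^4 * s^2 * c4 + q^5 * s * c5 + q^6 * c6) (6 * r * s^5 * c0 + 5 * q * r * s^4 * c1 + 4 * q^2 * r * s^3 * c2 + 3 * q^3 * r * s^2 * c3 + 2 * q^4 * r * s * c4 + q^5 * r * c5 + p * s^5 * c1 + 2 * p * q * s^4 * c2 + 3 * p * q^2 * s^3 * c3 + 4 * p * q^3 * s^2 * c4 + 5 * p * q^4 * s * c5 + 6 * p * q^5 * c6) (15 * r^2 * s^4 * c0 + 10 * q * r^2 * s^3 * c1 + 6 * q^2 * r^2 * s^2 * c2 + 3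 * q^3 * r^2 * s * c3 + q^4 * r^2 * c4 + 5 * p * r * s^4 * c1 + 8 * p * q * r * s^3 * c2 + 9 * p * q^2 * r * s^2 * c3 + 8 * p * q^3 * r * s * c4 + 5 * p * q^4 * r * c5 + p^2 * s^4 * c2 + 3 * p^2 * q * s^3 * c3 + 6 * p^2 * q^2 * s^2 * c4 + 10 * p^2 * q^3 * s * c5 + 15 * p^2 * q^4 * c6) (20 * r^3 * s^3 * c0 + 10 * q * r^3 * s^2 * c1 + 4 * q^2 * r^3 * s * c2 + q^3 * r^3 * c3 + 10 * p * r^2 * s^3 * c1 + 12 * p * q * r^2 * s^2 * c2 + 9 * p * q^2 * r^2 * s * c3 + 4 * p * q^3 * r^2 * c4 + 4 * p^2 * r * s^3 * c2 + 9 * p^2 * q * r * s^2 * c3 + 12 * p^2 * q^2 * r * s * c4 + 10 * p^2 * q^3 * r * c5 + p^3 * s^3 * c3 + 4 * p^3 * q * s^2 * c4 + 10 * p^3 * q^2 * s * c5 + 20 * p^3 * q^3 * c6) (15 * r^4 * s^2 * c0 + 5 * q * r^4 * s * c1 + q^2 * r^4 * c2 + 10 * p * r^3 * s^2 * c1 +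 8 * p * q * r^3 * s * c2 + 3 * p * q^2 * r^3 * c3 + 6 * p^2 * r^2 * s^2 * c2 + 9 * p^2 * q * r^2 * s * c3 + 6 * p^2 * q^2 * r^2 * c4 + 3 * p^3 * r * s^2 * c3 + 8 * p^3 * q * r * s * c4 + 10 * p^3 * q^2 * r * c5 + p^4 * s^2 * c4 + 5 * p^4 * q * s * c5 + 15 * p^4 * q^2 * c6) (6 * r^5 * s * c0 + q * r^5 * c1 + 5 * p * r^4 * s * c1 + 2 * p * q * r^4 * c2 + 4 * p^2 * r^3 * s * c2 + 3 * p^2 * q * r^3 * c3 + 3 * p^3 * r^2 * s * c3 + 4 * p^3 * q * r^2 * c4 + 2 * p^4 * r * s * c4 + 5 * p^4 * q * r * c5 + p^5 * s * c5 + 6 * p^5 * q * c6) (r^6 * c0 + p * r^5 * c1 + p^2 * r^4 * c2 + p^3 * r^3 * c3 + p^4 * r^2 * c4 + p^5 * r * c5 + p^6 * c6) := by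
  simp only [substMat, sextOf, map_add, map_mul, map_pow, map_ofNat, aeval_X, aeval_C,
    Matrix.of_apply, Matrix.cons_val', Matrix.cons_val_zero, Matrix.cons_val_one,
    Matrix.head_cons, Matrix.empty_val', Matrix.cons_val_fin_one, Matrix.head_fin_const,
    Matrix.cons_val_two, Matrix.tail_cons, Matrix.cons_val_three, algebraMap_eq]
  ring

set_option maxHeartbeats 2000000 in
private lemma key3 (p q r s d0 d1 d2 d3 : ℂ) :
    substMat !![p, q; r, s] (cubicOf ![d0, d1, d2, d3]) =
      cubicOf ![r^3 * d3 + p * r^2 * d2 + p^2 * r * d1 + p^3 * d0,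
        3 * r^2 * s * d3 + q * r^2 * d2 + 2 * p * r * s * d2 + 2 * p * q * r * d1 + p^2 * s * d1 + 3 * p^2 * q * d0,
        3 * r * s^2 * d3 + 2 * q * r * s * d2 + q^2 * r * d1 + p * s^2 * d2 + 2 * p * q * s * d1 + 3 * p * q^2 * d0,
        s^3 * d3 + q * s^2 * d2 + q^2 * s * d1 + q^3 * d0] := by
  simp only [substMat, cubicOf, map_add, map_mul, map_pow, map_ofNat, aeval_X, aeval_C,
    Matrix.of_apply, Matrix.cons_val', Matrix.cons_val_zero, Matrix.cons_val_one,
    Matrix.head_cons, Matrix.empty_val', Matrix.cons_val_fin_one, Matrix.head_fin_const,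
    Matrix.cons_val_two, Matrix.tail_cons, Matrix.cons_val_three, algebraMap_eq]
  ring

set_option maxHeartbeats 4000000 in
private lemma comp0 (p q r s c0 c1 c2 c3 c4 c5 c6 d0 d1 d2 d3 : ℂ)
    (h : p * s - q * r = 1) :
    (-1/20) * q^3 * r^6 * c3 * d3 + (1/15) * q^3 * r^6 * c2 * d2 + (-1/6) * q^3 * r^6 * c1 * d1 + q^3 * r^6 * c0 * d0 + (3/20) * p * q^2 * r^5 * s * c3 * d3 + (-1/5) * p * q^2 * r^5 * s * c2 * d2 + (1/2) * p * q^2 * r^5 * s * c1 * d1 + -3 * p * q^2 * r^5 * s * c0 * d0 + (-1/5) * p * q^3 * r^5 * c4 * d3 + (3/20) * p * q^3 * r^5 * c3 * d2 + (-1/5) * p * q^3 * r^5 * c2 * d1 + (1/2) * p * q^3 * r^5 * c1 * d0 + (-3/20) * p^2 * q * r^4 * s^2 * c3 * d3 + (1/5) * p^2 * q * r^4 * s^2 * c2 * d2 + (-1/2) * p^2 * q * r^4 * s^2 * c1 * d1 + 3 * p^2 * q * r^4 * s^2 * c0 * d0 + (3/5) * p^2 * q^2 * r^4 * s * c4 *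 d3 + (-9/20) * p^2 * q^2 * r^4 * s * c3 * d2 + (3/5) * p^2 * q^2 * r^4 * s * c2 * d1 + (-3/2) * p^2 * q^2 * r^4 * s * c1 * d0 + (-1/2) * p^2 * q^3 * r^4 * c5 * d3 + (1/5) * p^2 * q^3 * r^4 * c4 * d2 + (-3/20) * p^2 * q^3 * r^4 * c3 * d1 + (1/5) * p^2 * q^3 * r^4 * c2 * d0 + (1/20) * p^3 * r^3 * s^3 * c3 * d3 + (-1/15) * p^3 * r^3 * s^3 * c2 * d2 + (1/6) * p^3 * r^3 * s^3 * c1 * d1 + -1 * p^3 * r^3 * s^3 * c0 * d0 + (-3/5) * p^3 * q * r^3 * s^2 * c4 * d3 + (9/20) * p^3 * q * r^3 * s^2 * c3 * d2 + (-3/5) * p^3 * q * r^3 * s^2 * c2 * d1 + (3/2) * p^3 * q * r^3 * s^2 * c1 * d0 + (3/2) * p^3 * q^2 * r^3 * s * c5 * d3 + (-3/5) * p^3 * q^2 * r^3 * s * c4 * d2 + (9/20) * p^3 * q^2 * r^3 * s * c3 * d1 + (-3/5) * p^3 * q^2 * r^3 * s * c2 * d0 + -1 * p^3 * q^3 * r^3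 * c6 * d3 + (1/6) * p^3 * q^3 * r^3 * c5 * d2 + (-1/15) * p^3 * q^3 * r^3 * c4 * d1 + (1/20) * p^3 * q^3 * r^3 * c3 * d0 + (1/5) * p^4 * r^2 * s^3 * c4 * d3 + (-3/20) * p^4 * r^2 * s^3 * c3 * d2 + (1/5) * p^4 * r^2 * s^3 * c2 * d1 + (-1/2) * p^4 * r^2 * s^3 * c1 * d0 + (-3/2) * p^4 * q * r^2 * s^2 * c5 * d3 + (3/5) * p^4 * q * r^2 * s^2 * c4 * d2 + (-9/20) * p^4 * q * r^2 * s^2 * c3 * d1 + (3/5) * p^4 * q * r^2 * s^2 * c2 * d0 + 3 * p^4 * q^2 * r^2 * s * c6 * d3 + (-1/2) * p^4 * q^2 * r^2 * s * c5 * d2 + (1/5) * p^4 * q^2 * r^2 * s * c4 * d1 + (-3/20) * p^4 * q^2 * r^2 * s * c3 * d0 + (1/2) * p^5 * r * s^3 * c5 * d3 + (-1/5) * p^5 * r * s^3 * c4 * d2 + (3/20) * p^5 * r * s^3 * c3 * d1 + (-1/5) * p^5 * r * s^3 * c2 * d0 + -3 * p^5 * q * r * s^2 * c6 * d3 + (1/2)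 * p^5 * q * r * s^2 * c5 * d2 + (-1/5) * p^5 * q * r * s^2 * c4 * d1 + (3/20) * p^5 * q * r * s^2 * c3 * d0 + p^6 * s^3 * c6 * d3 + (-1/6) * p^6 * s^3 * c5 * d2 + (1/15) * p^6 * s^3 * c4 * d1 + (-1/20) * p^6 * s^3 * c3 * d0
    = (1/20) * r^3 * c3 * d3 + (-1/15) * r^3 * c2 * d2 + (1/6) * r^3 * c1 * d1 + -1 * r^3 * c0 * d0 + (1/5) * p * r^2 * c4 * d3 + (-3/20) * p * r^2 * c3 * d2 + (1/5) * p * r^2 * c2 * d1 + (-1/2) * p * r^2 * c1 * d0 + (1/2) * p^2 * r * c5 * d3 + (-1/5) * p^2 * r * c4 * d2 + (3/20) * p^2 * r * c3 * d1 + (-1/5) * p^2 * r * c2 * d0 + p^3 * c6 * d3 + (-1/6) * p^3 * c5 * d2 + (1/15) * p^3 * c4 * d1 + (-1/20) * p^3 * c3 * d0 := by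
  linear_combination (((p*s - q*r)^2 + (p*s - q*r) + 1) * ((1/20) * r^3 * c3 * d3 + (-1/15) * r^3 * c2 * d2 + (1/6) * r^3 * c1 * d1 + -1 * r^3 * c0 * d0 + (1/5) * p * r^2 * c4 * d3 + (-3/20) * p * r^2 * c3 * d2 + (1/5) * p * r^2 * c2 * d1 + (-1/2) * p * r^2 * c1 * d0 + (1/2) * p^2 * r * c5 * d3 + (-1/5) * p^2 * r * c4 * d2 + (3/20) * p^2 * r * c3 * d1 + (-1/5) * p^2 * r * c2 * d0 + p^3 * c6 * d3 + (-1/6) * p^3 * c5 * d2 + (1/15) * p^3 * c4 * d1 + (-1/20) * p^3 * c3 * d0)) * h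

set_option maxHeartbeats 4000000 in
private lemma comp1 (p q r s c0 c1 c2 c3 c4 c5 c6 d0 d1 d2 d3 : ℂ)
    (h : p * s - q * r = 1) :
    (-3/20) * q^3 * r^5 * s * c3 * d3 + (1/5) * q^3 * r^5 * s * c2 * d2 + (-1/2) * q^3 * r^5 * s * c1 * d1 + 3 * q^3 * r^5 * s * c0 * d0 + (-1/5) * q^4 * r^5 * c4 * d3 + (3/20) * q^4 * r^5 * c3 * d2 + (-1/5) * q^4 * r^5 * c2 * d1 + (1/2) * q^4 * r^5 * c1 * d0 + (9/20) * p * q^2 * r^4 * s^2 * c3 * d3 + (-3/5) * p * q^2 * r^4 * s^2 * c2 * d2 + (3/2) * p * q^2 * r^4 * s^2 * c1 * d1 + -9 * p * q^2 * r^4 * s^2 * c0 * d0 + (1/5) * p * q^3 * r^4 * s * c4 * d3 + (-3/20) * p * q^3 * r^4 * s * c3 * d2 + (1/5) * p * q^3 * r^4 * s * c2 * d1 + (-1/2) * p * q^3 * r^4 * s * c1 * d0 + -1 * p * q^4 * r^4 * c5 * d3 + (2/5) * p * q^4 * r^4 * c4 * d2 + (-3/10) * p * q^4 * r^4 * c3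 * d1 + (2/5) * p * q^4 * r^4 * c2 * d0 + (-9/20) * p^2 * q * r^3 * s^3 * c3 * d3 + (3/5) * p^2 * q * r^3 * s^3 * c2 * d2 + (-3/2) * p^2 * q * r^3 * s^3 * c1 * d1 + 9 * p^2 * q * r^3 * s^3 * c0 * d0 + (3/5) * p^2 * q^2 * r^3 * s^2 * c4 * d3 + (-9/20) * p^2 * q^2 * r^3 * s^2 * c3 * d2 + (3/5) * p^2 * q^2 * r^3 * s^2 * c2 * d1 + (-3/2) * p^2 * q^2 * r^3 * s^2 * c1 * d0 + (5/2) * p^2 * q^3 * r^3 * s * c5 * d3 + -1 * p^2 * q^3 * r^3 * s * c4 * d2 + (3/4) * p^2 * q^3 * r^3 * s * c3 * d1 + -1 * p^2 * q^3 * r^3 * s * c2 * d0 + -3 * p^2 * q^4 * r^3 * c6 * d3 + (1/2) * p^2 * q^4 * r^3 * c5 * d2 + (-1/5) * p^2 * q^4 * r^3 * c4 * d1 + (3/20) * p^2 * q^4 * r^3 * c3 * d0 + (3/20) * p^3 * r^2 * s^4 * c3 * d3 + (-1/5) * p^3 * r^2 * s^4 * c2 * d2 + (1/2) * p^3 * r^2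 * s^4 * c1 * d1 + -3 * p^3 * r^2 * s^4 * c0 * d0 + -1 * p^3 * q * r^2 * s^3 * c4 * d3 + (3/4) * p^3 * q * r^2 * s^3 * c3 * d2 + -1 * p^3 * q * r^2 * s^3 * c2 * d1 + (5/2) * p^3 * q * r^2 * s^3 * c1 * d0 + (-3/2) * p^3 * q^2 * r^2 * s^2 * c5 * d3 + (3/5) * p^3 * q^2 * r^2 * s^2 * c4 * d2 + (-9/20) * p^3 * q^2 * r^2 * s^2 * c3 * d1 + (3/5) * p^3 * q^2 * r^2 * s^2 * c2 * d0 + 9 * p^3 * q^3 * r^2 * s * c6 * d3 + (-3/2) * p^3 * q^3 * r^2 * s * c5 * d2 + (3/5) * p^3 * q^3 * r^2 * s * c4 * d1 + (-9/20) * p^3 * q^3 * r^2 * s * c3 * d0 + (2/5) * p^4 * r * s^4 * c4 * d3 + (-3/10) * p^4 * r * s^4 * c3 * d2 + (2/5) * p^4 * r * s^4 * c2 * d1 + -1 * p^4 * r * s^4 * c1 * d0 + (-1/2) * p^4 * q * r * s^3 * c5 * d3 + (1/5) * p^4 * q * r * s^3 * c4 * d2 + (-3/20) * p^4 * q * r *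 s^3 * c3 * d1 + (1/5) * p^4 * q * r * s^3 * c2 * d0 + -9 * p^4 * q^2 * r * s^2 * c6 * d3 + (3/2) * p^4 * q^2 * r * s^2 * c5 * d2 + (-3/5) * p^4 * q^2 * r * s^2 * c4 * d1 + (9/20) * p^4 * q^2 * r * s^2 * c3 * d0 + (1/2) * p^5 * s^4 * c5 * d3 + (-1/5) * p^5 * s^4 * c4 * d2 + (3/20) * p^5 * s^4 * c3 * d1 + (-1/5) * p^5 * s^4 * c2 * d0 + 3 * p^5 * q * s^3 * c6 * d3 + (-1/2) * p^5 * q * s^3 * c5 * d2 + (1/5) * p^5 * q * s^3 * c4 * d1 + (-3/20) * p^5 * q * s^3 * c3 * d0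
    = (3/20) * r^2 * s * c3 * d3 + (-1/5) * r^2 * s * c2 * d2 + (1/2) * r^2 * s * c1 * d1 + -3 * r^2 * s * c0 * d0 + (1/5) * q * r^2 * c4 * d3 + (-3/20) * q * r^2 * c3 * d2 + (1/5) * q * r^2 * c2 * d1 + (-1/2) * q * r^2 * c1 * d0 + (2/5) * p * r * s * c4 * d3 + (-3/10) * p * r * s * c3 * d2 + (2/5) * p * r * s * c2 * d1 + -1 * p * r * s * c1 * d0 + p * q * r * c5 * d3 + (-2/5) * p * q * r * c4 * d2 + (3/10) * p * q * r * c3 * d1 + (-2/5) * p * q * r * c2 * d0 + (1/2) * p^2 * s * c5 * d3 + (-1/5) * p^2 * s * c4 * d2 + (3/20) * p^2 * s * c3 * d1 + (-1/5) * p^2 * s * c2 * d0 + 3 * p^2 * q * c6 * d3 + (-1/2) * p^2 * q * c5 * d2 + (1/5) * p^2 * q * c4 * d1 + (-3/20) * p^2 * q * c3 * d0 := by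
  linear_combination (((p*s - q*r)^2 + (p*s - q*r) + 1) * ((3/20) * r^2 * s * c3 * d3 + (-1/5) * r^2 * s * c2 * d2 + (1/2) * r^2 * s * c1 * d1 + -3 * r^2 * s * c0 * d0 + (1/5) * q * r^2 * c4 * d3 + (-3/20) * q * r^2 * c3 * d2 + (1/5) * q * r^2 * c2 * d1 + (-1/2) * q * r^2 * c1 * d0 + (2/5) * p * r * s * c4 * d3 + (-3/10) * p * r * s * c3 * d2 + (2/5) * p * r * s * c2 * d1 + -1 * p * r * s * c1 * d0 + p * q * r * c5 * d3 + (-2/5) * p * q * r * c4 * d2 + (3/10) * p * q * r * c3 * d1 + (-2/5) * p * q * r * c2 * d0 + (1/2) * p^2 * s * c5 * d3 + (-1/5) * p^2 * s * c4 * d2 + (3/20) * p^2 * s * c3 * d1 + (-1/5) * p^2 * s * c2 * d0 + 3 * p^2 * q * c6 * d3 + (-1/2) * p^2 * q * c5 * d2 + (1/5) * p^2 * q * c4 * d1 + (-3/20) * p^2 * q * c3 * d0)) * h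

set_option maxHeartbeats 4000000 in
private lemma comp2 (p q r s c0 c1 c2 c3 c4 c5 c6 d0 d1 d2 d3 : ℂ)
    (h : p * s - q * r = 1) :
    (-3/20) * q^3 * r^4 * s^2 * c3 * d3 + (1/5) * q^3 * r^4 * s^2 * c2 * d2 + (-1/2) * q^3 * r^4 * s^2 * c1 * d1 + 3 * q^3 * r^4 * s^2 * c0 * d0 + (-2/5) * q^4 * r^4 * s * c4 * d3 + (3/10) * q^4 * r^4 * s * c3 * d2 + (-2/5) * q^4 * r^4 * s * c2 * d1 + q^4 * r^4 * s * c1 * d0 + (-1/2) * q^5 * r^4 * c5 * d3 + (1/5) * q^5 * r^4 * c4 * d2 + (-3/20) * q^5 * r^4 * c3 * d1 + (1/5) * q^5 * r^4 * c2 * d0 + (9/20) * p * q^2 * r^3 * s^3 * c3 * d3 + (-3/5) * p * q^2 * r^3 * s^3 * c2 * d2 + (3/2) * p * q^2 * r^3 * s^3 * c1 * d1 + -9 * p * q^2 * r^3 * s^3 * c0 * d0 + p * q^3 * r^3 * s^2 * c4 * d3 + (-3/4) * p * q^3 * r^3 * s^2 * c3 * d2 + p * q^3 * r^3 * s^2 *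 c2 * d1 + (-5/2) * p * q^3 * r^3 * s^2 * c1 * d0 + (1/2) * p * q^4 * r^3 * s * c5 * d3 + (-1/5) * p * q^4 * r^3 * s * c4 * d2 + (3/20) * p * q^4 * r^3 * s * c3 * d1 + (-1/5) * p * q^4 * r^3 * s * c2 * d0 + -3 * p * q^5 * r^3 * c6 * d3 + (1/2) * p * q^5 * r^3 * c5 * d2 + (-1/5) * p * q^5 * r^3 * c4 * d1 + (3/20) * p * q^5 * r^3 * c3 * d0 + (-9/20) * p^2 * q * r^2 * s^4 * c3 * d3 + (3/5) * p^2 * q * r^2 * s^4 * c2 * d2 + (-3/2) * p^2 * q * r^2 * s^4 * c1 * d1 + 9 * p^2 * q * r^2 * s^4 * c0 * d0 + (-3/5) * p^2 * q^2 * r^2 * s^3 * c4 * d3 + (9/20) * p^2 * q^2 * r^2 * s^3 * c3 * d2 + (-3/5) * p^2 * q^2 * r^2 * s^3 * c2 * d1 + (3/2) * p^2 * q^2 * r^2 * s^3 * c1 * d0 + (3/2) * p^2 * q^3 * r^2 * s^2 * c5 * d3 + (-3/5) * p^2 * q^3 * r^2 * s^2 * c4 * d2 + (9/20) * p^2 *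 q^3 * r^2 * s^2 * c3 * d1 + (-3/5) * p^2 * q^3 * r^2 * s^2 * c2 * d0 + 9 * p^2 * q^4 * r^2 * s * c6 * d3 + (-3/2) * p^2 * q^4 * r^2 * s * c5 * d2 + (3/5) * p^2 * q^4 * r^2 * s * c4 * d1 + (-9/20) * p^2 * q^4 * r^2 * s * c3 * d0 + (3/20) * p^3 * r * s^5 * c3 * d3 + (-1/5) * p^3 * r * s^5 * c2 * d2 + (1/2) * p^3 * r * s^5 * c1 * d1 + -3 * p^3 * r * s^5 * c0 * d0 + (-1/5) * p^3 * q * r * s^4 * c4 * d3 + (3/20) * p^3 * q * r * s^4 * c3 * d2 + (-1/5) * p^3 * q * r * s^4 * c2 * d1 + (1/2) * p^3 * q * r * s^4 * c1 * d0 + (-5/2) * p^3 * q^2 * r * s^3 * c5 * d3 + p^3 * q^2 * r * s^3 * c4 * d2 + (-3/4) * p^3 * q^2 * r * s^3 * c3 * d1 + p^3 * q^2 * r * s^3 * c2 * d0 + -9 * p^3 * q^3 * r * s^2 * c6 * d3 + (3/2) * p^3 * q^3 * r * s^2 * c5 * d2 + (-3/5) * p^3 * q^3 * r * s^2 * c4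 * d1 + (9/20) * p^3 * q^3 * r * s^2 * c3 * d0 + (1/5) * p^4 * s^5 * c4 * d3 + (-3/20) * p^4 * s^5 * c3 * d2 + (1/5) * p^4 * s^5 * c2 * d1 + (-1/2) * p^4 * s^5 * c1 * d0 + p^4 * q * s^4 * c5 * d3 + (-2/5) * p^4 * q * s^4 * c4 * d2 + (3/10) * p^4 * q * s^4 * c3 * d1 + (-2/5) * p^4 * q * s^4 * c2 * d0 + 3 * p^4 * q^2 * s^3 * c6 * d3 + (-1/2) * p^4 * q^2 * s^3 * c5 * d2 + (1/5) * p^4 * q^2 * s^3 * c4 * d1 + (-3/20) * p^4 * q^2 * s^3 * c3 * d0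
    = (3/20) * r * s^2 * c3 * d3 + (-1/5) * r * s^2 * c2 * d2 + (1/2) * r * s^2 * c1 * d1 + -3 * r * s^2 * c0 * d0 + (2/5) * q * r * s * c4 * d3 + (-3/10) * q * r * s * c3 * d2 + (2/5) * q * r * s * c2 * d1 + -1 * q * r * s * c1 * d0 + (1/2) * q^2 * r * c5 * d3 + (-1/5) * q^2 * r * c4 * d2 + (3/20) * q^2 * r * c3 * d1 + (-1/5) * q^2 * r * c2 * d0 + (1/5) * p * s^2 * c4 * d3 + (-3/20) * p * s^2 * c3 * d2 + (1/5) * p * s^2 * c2 * d1 + (-1/2) * p * s^2 * c1 * d0 + p * q * s * c5 * d3 + (-2/5) * p * q * s * c4 * d2 + (3/10) * p * q * s * c3 * d1 + (-2/5) * p * q * s * c2 * d0 + 3 * p * q^2 * c6 * d3 + (-1/2) * p * q^2 * c5 * d2 + (1/5) * p * q^2 * c4 * d1 + (-3/20) * p * q^2 * c3 * d0 := by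
  linear_combination (((p*s - q*r)^2 + (p*s - q*r) + 1) * ((3/20) * r * s^2 * c3 * d3 + (-1/5) * r * s^2 * c2 * d2 + (1/2) * r * s^2 * c1 * d1 + -3 * r * s^2 * c0 * d0 + (2/5) * q * r * s * c4 * d3 + (-3/10) * q * r * s * c3 * d2 + (2/5) * q * r * s * c2 * d1 + -1 * q * r * s * c1 * d0 + (1/2) * q^2 * r * c5 * d3 + (-1/5) * q^2 * r * c4 * d2 + (3/20) * q^2 * r * c3 * d1 + (-1/5) * q^2 * r * c2 * d0 + (1/5) * p * s^2 * c4 * d3 + (-3/20) * p * s^2 * c3 * d2 + (1/5) * p * s^2 * c2 * d1 + (-1/2) * p * s^2 * c1 * d0 + p * q * s * c5 * d3 + (-2/5) * p * q * s * c4 * d2 + (3/10) * p * q * s * c3 * d1 + (-2/5) * p * q * s * c2 * d0 + 3 * p * q^2 * c6 * d3 + (-1/2) * p * q^2 * c5 * d2 + (1/5) * p * q^2 * c4 * d1 + (-3/20) * p * q^2 * c3 * d0)) * h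

set_option maxHeartbeats 4000000 in
private lemma comp3 (p q r s c0 c1 c2 c3 c4 c5 c6 d0 d1 d2 d3 : ℂ)
    (h : p * s - q * r = 1) :
    (-1/20) * q^3 * r^3 * s^3 * c3 * d3 + (1/15) * q^3 * r^3 * s^3 * c2 * d2 + (-1/6) * q^3 * r^3 * s^3 * c1 * d1 + q^3 * r^3 * s^3 * c0 * d0 + (-1/5) * q^4 * r^3 * s^2 * c4 * d3 + (3/20) * q^4 * r^3 * s^2 * c3 * d2 + (-1/5) * q^4 * r^3 * s^2 * c2 * d1 + (1/2) * q^4 * r^3 * s^2 * c1 * d0 + (-1/2) * q^5 * r^3 * s * c5 * d3 + (1/5) * q^5 * r^3 * s * c4 * d2 + (-3/20) * q^5 * r^3 * s * c3 * d1 + (1/5) * q^5 * r^3 * s * c2 * d0 + -1 * q^6 * r^3 * c6 * d3 + (1/6) * q^6 * r^3 * c5 * d2 + (-1/15) * q^6 * r^3 * c4 * d1 + (1/20) * q^6 * r^3 * c3 * d0 + (3/20) * p * q^2 * r^2 * s^4 * c3 * d3 + (-1/5) * p * q^2 * r^2 * s^4 * c2 * d2 + (1/2) * p * q^2 * r^2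 * s^4 * c1 * d1 + -3 * p * q^2 * r^2 * s^4 * c0 * d0 + (3/5) * p * q^3 * r^2 * s^3 * c4 * d3 + (-9/20) * p * q^3 * r^2 * s^3 * c3 * d2 + (3/5) * p * q^3 * r^2 * s^3 * c2 * d1 + (-3/2) * p * q^3 * r^2 * s^3 * c1 * d0 + (3/2) * p * q^4 * r^2 * s^2 * c5 * d3 + (-3/5) * p * q^4 * r^2 * s^2 * c4 * d2 + (9/20) * p * q^4 * r^2 * s^2 * c3 * d1 + (-3/5) * p * q^4 * r^2 * s^2 * c2 * d0 + 3 * p * q^5 * r^2 * s * c6 * d3 + (-1/2) * p * q^5 * r^2 * s * c5 * d2 + (1/5) * p * q^5 * r^2 * s * c4 * d1 + (-3/20) * p * q^5 * r^2 * s * c3 * d0 + (-3/20) * p^2 * q * r * s^5 * c3 * d3 + (1/5) * p^2 * q * r * s^5 * c2 * d2 + (-1/2) * p^2 * q * r * s^5 * c1 * d1 + 3 * p^2 * q * r * s^5 * c0 * d0 + (-3/5) * p^2 * q^2 * r * s^4 * c4 * d3 + (9/20) * p^2 * q^2 * r * s^4 * c3 * d2 + (-3/5) * p^2 * q^2 *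 r * s^4 * c2 * d1 + (3/2) * p^2 * q^2 * r * s^4 * c1 * d0 + (-3/2) * p^2 * q^3 * r * s^3 * c5 * d3 + (3/5) * p^2 * q^3 * r * s^3 * c4 * d2 + (-9/20) * p^2 * q^3 * r * s^3 * c3 * d1 + (3/5) * p^2 * q^3 * r * s^3 * c2 * d0 + -3 * p^2 * q^4 * r * s^2 * c6 * d3 + (1/2) * p^2 * q^4 * r * s^2 * c5 * d2 + (-1/5) * p^2 * q^4 * r * s^2 * c4 * d1 + (3/20) * p^2 * q^4 * r * s^2 * c3 * d0 + (1/20) * p^3 * s^6 * c3 * d3 + (-1/15) * p^3 * s^6 * c2 * d2 + (1/6) * p^3 * s^6 * c1 * d1 + -1 * p^3 * s^6 * c0 * d0 + (1/5) * p^3 * q * s^5 * c4 * d3 + (-3/20) * p^3 * q * s^5 * c3 * d2 + (1/5) * p^3 * q * s^5 * c2 * d1 + (-1/2) * p^3 * q * s^5 * c1 * d0 + (1/2) * p^3 * q^2 * s^4 * c5 * d3 + (-1/5) * p^3 * q^2 * s^4 * c4 * d2 + (3/20) * p^3 * q^2 * s^4 * c3 * d1 + (-1/5) * p^3 * q^2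 * s^4 * c2 * d0 + p^3 * q^3 * s^3 * c6 * d3 + (-1/6) * p^3 * q^3 * s^3 * c5 * d2 + (1/15) * p^3 * q^3 * s^3 * c4 * d1 + (-1/20) * p^3 * q^3 * s^3 * c3 * d0
    = (1/20) * s^3 * c3 * d3 + (-1/15) * s^3 * c2 * d2 + (1/6) * s^3 * c1 * d1 + -1 * s^3 * c0 * d0 + (1/5) * q * s^2 * c4 * d3 + (-3/20) * q * s^2 * c3 * d2 + (1/5) * q * s^2 * c2 * d1 + (-1/2) * q * s^2 * c1 * d0 + (1/2) * q^2 * s * c5 * d3 + (-1/5) * q^2 * s * c4 * d2 + (3/20) * q^2 * s * c3 * d1 + (-1/5) * q^2 * s * c2 * d0 + q^3 * c6 * d3 + (-1/6) * q^3 * c5 * d2 + (1/15) * q^3 * c4 * d1 + (-1/20) * q^3 * c3 * d0 := by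
  linear_combination (((p*s - q*r)^2 + (p*s - q*r) + 1) * ((1/20) * s^3 * c3 * d3 + (-1/15) * s^3 * c2 * d2 + (1/6) * s^3 * c1 * d1 + -1 * s^3 * c0 * d0 + (1/5) * q * s^2 * c4 * d3 + (-3/20) * q * s^2 * c3 * d2 + (1/5) * q * s^2 * c2 * d1 + (-1/2) * q * s^2 * c1 * d0 + (1/2) * q^2 * s * c5 * d3 + (-1/5) * q^2 * s * c4 * d2 + (3/20) * q^2 * s * c3 * d1 + (-1/5) * q^2 * s * c2 * d0 + q^3 * c6 * d3 + (-1/6) * q^3 * c5 * d2 + (1/15) * q^3 * c4 * d1 + (-1/20) * q^3 * c3 * d0)) * h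


/- **Statement 11.** The pairing `(Q, Q') ↦ Q̂(Q')` is `SL(2,ℂ)`-equivariant: for every
`g ∈ SL(2,ℂ)`, every binary sextic `Q` and every binary cubic `Q'`, one has
`(g·Q)^(g·Q') = g·(Q̂(Q'))`. -/
set_option maxHeartbeats 40000000 in
theorem qhat_sl2_equivariant (g : Matrix.SpecialLinearGroup (Fin 2) ℂ)
    (Q Q' : MvPolynomial (Fin 2) ℂ) (hQ : Q.IsHomogeneous 6) (hQ' : Q'.IsHomogeneous 3) :
    qhat (slAct g Q) (slAct g Q') = slAct g (qhat Q Q') := by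
  obtain ⟨p, q, r, s, hg⟩ : ∃ p q r s,
      ((g⁻¹ : Matrix.SpecialLinearGroup (Fin 2) ℂ) : Matrix (Fin 2) (Fin 2) ℂ) = !![p, q; r, s] :=
    ⟨_, _, _, _, Matrix.eta_fin_two _⟩
  have hdet : p * s - q * r = 1 := by
    have h1 := Matrix.SpecialLinearGroup.det_coe (g⁻¹)
    rw [hg, Matrix.det_fin_two_of] at h1
    exact h1
  have hQr := sext_repr Q hQ
  have hQ'r := cub_repr Q' hQ'
  simp only [slAct, hg]
  rw [hQr, hQ'r]
  rw [key6, key3]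
  simp only [qhat, sextCoeff_sextOf0, sextCoeff_sextOf1, sextCoeff_sextOf2, sextCoeff_sextOf3,
    sextCoeff_sextOf4, sextCoeff_sextOf5, sextCoeff_sextOf6, cubCoeff_cubicOf,
    Matrix.cons_val_zero, Matrix.cons_val_one, Matrix.head_cons, Matrix.cons_val_two,
    Matrix.tail_cons, Matrix.cons_val_three]
  rw [key3]
  congr 1
  have hvec : ∀ v w : Fin 4 → ℂ, v 0 = w 0 → v 1 = w 1 → v 2 = w 2 → v 3 = w 3 → v = w := by
    intro v w h0 h1 h2 h3
    funext j
    fin_cases j <;> assumption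
  refine hvec _ _ ?_ ?_ ?_ ?_ <;>
    simp only [Matrix.cons_val_zero, Matrix.cons_val_one, Matrix.head_cons, Matrix.cons_val_two,
      Matrix.tail_cons, Matrix.cons_val_three]
  · linear_combination comp0 p q r s (MvPolynomial.coeff (Finsupp.single 0 0 + Finsupp.single 1 6) Q) (MvPolynomial.coeff (Finsupp.single 0 1 + Finsupp.single 1 5) Q) (MvPolynomial.coeff (Finsupp.single 0 2 + Finsupp.single 1 4) Q) (MvPolynomial.coeff (Finsupp.single 0 3 + Finsupp.single 1 3) Q) (MvPolynomial.coeff (Finsupp.single 0 4 + Finsupp.single 1 2) Q) (MvPolynomial.coeff (Finsupp.single 0 5 + Finsupp.single 1 1) Q) (MvPolynomial.coeff (Finsupp.single 0 6 + Finsupp.single 1 0) Q)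
      (MvPolynomial.coeff (Finsupp.single 0 3 + Finsupp.single 1 0) Q') (MvPolynomial.coeff (Finsupp.single 0 2 + Finsupp.single 1 1) Q') (MvPolynomial.coeff (Finsupp.single 0 1 + Finsupp.single 1 2) Q') (MvPolynomial.coeff (Finsupp.single 0 0 + Finsupp.single 1 3) Q') hdet
  · linear_combination comp1 p q r s (MvPolynomial.coeff (Finsupp.single 0 0 + Finsupp.single 1 6) Q) (MvPolynomial.coeff (Finsupp.single 0 1 + Finsupp.single 1 5) Q) (MvPolynomial.coeff (Finsupp.single 0 2 + Finsupp.single 1 4) Q) (MvPolynomial.coeff (Finsupp.single 0 3 + Finsupp.single 1 3) Q) (MvPolynomial.coeff (Finsupp.single 0 4 + Finsupp.single 1 2) Q) (MvPolynomial.coeff (Finsupp.single 0 5 + Finsupp.single 1 1) Q) (MvPolynomial.coeff (Finsupp.single 0 6 + Finsupp.single 1 0) Q)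
      (MvPolynomial.coeff (Finsupp.single 0 3 + Finsupp.single 1 0) Q') (MvPolynomial.coeff (Finsupp.single 0 2 + Finsupp.single 1 1) Q') (MvPolynomial.coeff (Finsupp.single 0 1 + Finsupp.single 1 2) Q') (MvPolynomial.coeff (Finsupp.single 0 0 + Finsupp.single 1 3) Q') hdet
  · linear_combination comp2 p q r s (MvPolynomial.coeff (Finsupp.single 0 0 + Finsupp.single 1 6) Q) (MvPolynomial.coeff (Finsupp.single 0 1 + Finsupp.single 1 5) Q) (MvPolynomial.coeff (Finsupp.single 0 2 + Finsupp.single 1 4) Q) (MvPolynomial.coeff (Finsupp.single 0 3 + Finsupp.single 1 3) Q) (MvPolynomial.coeff (Finsupp.single 0 4 + Finsupp.single 1 2) Q) (MvPolynomial.coeff (Finsupp.single 0 5 + Finsupp.single 1 1) Q) (MvPolynomial.coeff (Finsupp.single 0 6 + Finsupp.single 1 0) Q)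
      (MvPolynomial.coeff (Finsupp.single 0 3 + Finsupp.single 1 0) Q') (MvPolynomial.coeff (Finsupp.single 0 2 + Finsupp.single 1 1) Q') (MvPolynomial.coeff (Finsupp.single 0 1 + Finsupp.single 1 2) Q') (MvPolynomial.coeff (Finsupp.single 0 0 + Finsupp.single 1 3) Q') hdet
  · linear_combination comp3 p q r s (MvPolynomial.coeff (Finsupp.single 0 0 + Finsupp.single 1 6) Q) (MvPolynomial.coeff (Finsupp.single 0 1 + Finsupp.single 1 5) Q) (MvPolynomial.coeff (Finsupp.single 0 2 + Finsupp.single 1 4) Q) (MvPolynomial.coeff (Finsupp.single 0 3 + Finsupp.single 1 3) Q) (MvPolynomial.coeff (Finsupp.single 0 4 + Finsupp.single 1 2) Q) (MvPolynomial.coeff (Finsupp.single 0 5 + Finsupp.single 1 1) Q) (MvPolynomial.coeff (Finsupp.single 0 6 + Finsupp.single 1 0) Q)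
      (MvPolynomial.coeff (Finsupp.single 0 3 + Finsupp.single 1 0) Q') (MvPolynomial.coeff (Finsupp.single 0 2 + Finsupp.single 1 1) Q') (MvPolynomial.coeff (Finsupp.single 0 1 + Finsupp.single 1 2) Q') (MvPolynomial.coeff (Finsupp.single 0 0 + Finsupp.single 1 3) Q') hdet
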